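/- arXiv:1411.7632 — 8 statements merged into one kernel-verified Lean document; each statement's English description precedes it below -/
import Mathlib

section
/- Let n be a positive integer, A an n×n real matrix, P and W symmetric positive definite n×n real matrices, and Π a symmetric n×n real matrix. Then the following are equivalent: (i) Π ≻ 0 and Π ⪯ (P⁻¹ + Aᵀ W⁻¹ A)⁻¹; (ii) Π ≻ 0 and Π ⪯ P − P Aᵀ (W + A P Aᵀ)⁻¹ A P; (iii) Π ≻ 0 and the 2n×2n block matrix [[P − Π, P Aᵀ],[A P, W + A P Aᵀ]] is positive semidefinite. -/
/-!
The Woodbury identity rewrites `(P⁻¹ + Aᵀ W⁻¹ A)⁻¹` as `P - P Aᵀ (W + A P Aᵀ)⁻¹ A P`, which gives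
(i) ⇔ (ii). Since `W + A P Aᵀ ≻ 0`, the block matrix in (iii) is positive semidefinite iff its
Schur complement `P - Q - P Aᵀ (W + A P Aᵀ)⁻¹ A P` is, which gives (ii) ⇔ (iii).
-/

open Matrix
open scoped ComplexOrder

namespace Matrix

variable {m n 𝕜 : Type*} [Fintype m] [Fintype n] [RCLike 𝕜]

theorem PosDef.add_mul_mul_conjTranspose {W : Matrix m m 𝕜} {P : Matrix n n 𝕜} (hW : W.PosDef)
    (hP : P.PosSemidef) (A : Matrix m n 𝕜) : (W + A * P * Aᴴ).PosDef :=
  hW.add_posSemidef (hP.mul_mul_conjTranspose_same A)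

theorem PosDef.inv_add_conjTranspose_mul_inv_mul [DecidableEq m] [DecidableEq n]
    {P : Matrix n n 𝕜} {W : Matrix m m 𝕜} (hP : P.PosDef) (hW : W.PosDef) (A : Matrix m n 𝕜) :
    (P⁻¹ + Aᴴ * W⁻¹ * A)⁻¹ = P - P * Aᴴ * (W + A * P * Aᴴ)⁻¹ * (A * P) := by
  have hPinv : P⁻¹⁻¹ = P := nonsing_inv_nonsing_inv _ hP.det_pos.ne'.isUnit
  have hWinv : W⁻¹⁻¹ = W := nonsing_inv_nonsing_inv _ hW.det_pos.ne'.isUnit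
  have hD : IsUnit (W⁻¹⁻¹ + A * P⁻¹⁻¹ * Aᴴ) := by
    rw [hPinv, hWinv]
    exact (hW.add_mul_mul_conjTranspose hP.posSemidef A).isUnit
  rw [add_mul_mul_inv_eq_sub _ _ _ _ (isUnit_nonsing_inv_iff.2 hP.isUnit)
    (isUnit_nonsing_inv_iff.2 hW.isUnit) hD, hPinv, hWinv, Matrix.mul_assoc]

end Matrix

theorem lmi_equiv_general (n : ℕ) (A P W Q : Matrix (Fin n) (Fin n) ℝ)
    (hP : P.PosDef) (hW : W.PosDef) :
    ((Q.PosDef ∧ ((P⁻¹ + Aᵀ * W⁻¹ * A)⁻¹ - Q).PosSemidef) ↔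
      (Q.PosDef ∧ (P - P * Aᵀ * (W + A * P * Aᵀ)⁻¹ * (A * P) - Q).PosSemidef)) ∧
    ((Q.PosDef ∧ (P - P * Aᵀ * (W + A * P * Aᵀ)⁻¹ * (A * P) - Q).PosSemidef) ↔
      (Q.PosDef ∧
        (fromBlocks (P - Q) (P * Aᵀ) (A * P) (W + A * P * Aᵀ)).PosSemidef)) := by
  simp only [← conjTranspose_eq_transpose_of_trivial]
  have hD := hW.add_mul_mul_conjTranspose hP.posSemidef A
  have := hD.isUnit.invertible
  have hPA : (P * Aᴴ)ᴴ = A * P := by rw [conjTranspose_mul, conjTranspose_conjTranspose, hP.isHermitian.eq]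
  have hSchur := PosDef.fromBlocks₂₂ (P - Q) (P * Aᴴ) hD
  rw [hPA] at hSchur
  rw [hP.inv_add_conjTranspose_mul_inv_mul hW A, hSchur, sub_right_comm]
  exact ⟨.rfl, .rfl⟩

/-- For `A` an `n × n` real matrix, `P`, `W` symmetric positive definite,
and `Q` (playing the role of `Π`) a symmetric `n × n` real matrix, the following are
equivalent:
(i) `Q ≻ 0` and `Q ⪯ (P⁻¹ + Aᵀ W⁻¹ A)⁻¹`;
(ii) `Q ≻ 0` and `Q ⪯ P − P Aᵀ (W + A P Aᵀ)⁻¹ A P`;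
(iii) `Q ≻ 0` and the block matrix `[[P − Q, P Aᵀ],[A P, W + A P Aᵀ]]` is positive
semidefinite. -/
theorem lmi_equiv (n : ℕ) (hn : 0 < n) (A P W Q : Matrix (Fin n) (Fin n) ℝ)
    (hP : P.PosDef) (hW : W.PosDef) (hQ : Q.IsSymm) :
    ((Q.PosDef ∧ ((P⁻¹ + Aᵀ * W⁻¹ * A)⁻¹ - Q).PosSemidef) ↔
      (Q.PosDef ∧ (P - P * Aᵀ * (W + A * P * Aᵀ)⁻¹ * (A * P) - Q).PosSemidef)) ∧
    ((Q.PosDef ∧ (P - P * Aᵀ * (W + A * P * Aᵀ)⁻¹ * (A * P) - Q).PosSemidef) ↔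
      (Q.PosDef ∧
        (fromBlocks (P - Q) (P * Aᵀ) (A * P) (W + A * P * Aᵀ)).PosSemidef)) :=
  lmi_equiv_general n A P W Q hP hW
end

section
/- Let n be a positive integer, A an n×n real matrix, and P, W symmetric positive definite n×n real matrices. Then ½ log det(A P Aᵀ + W) − ½ log det P = ½ log det W + inf { −½ log det Π : Π symmetric, Π ≻ 0, and the block matrix [[P − Π, P Aᵀ],[A P, W + A P Aᵀ]] is positive semidefinite }, and the infimum is attained (at Π = (P⁻¹ + Aᵀ W⁻¹ A)⁻¹). -/
open Matrix

/-!
By the Schur complement with respect to the invertible block `W + A P Aᵀ` and the Woodbury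
identity, the block matrix is positive semidefinite exactly when `Π ⪯ (P⁻¹ + Aᵀ W⁻¹ A)⁻¹`.
Since the determinant is monotone on positive definite matrices, `−½ log det Π` is therefore
minimised at `Π = (P⁻¹ + Aᵀ W⁻¹ A)⁻¹`. The value of the minimum comes from the matrix determinant
lemma `det (W + A P Aᵀ) = det W · det P · det (P⁻¹ + Aᵀ W⁻¹ A)`.
-/

/-- The feasible-value set of the per-stage determinant maximization:
values `−½ log det Q` over symmetric `Q ≻ 0` such that the block matrix
`[[P − Q, P Aᵀ],[A P, W + A P Aᵀ]]` is positive semidefinite. -/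
def stageFeasValues (n : ℕ) (A P W : Matrix (Fin n) (Fin n) ℝ) : Set ℝ :=
  {x : ℝ | ∃ Q : Matrix (Fin n) (Fin n) ℝ, Q.PosDef ∧
    (fromBlocks (P - Q) (P * Aᵀ) (A * P) (W + A * P * Aᵀ)).PosSemidef ∧
    x = -(1 / 2) * Real.log Q.det}

open scoped Pointwise MatrixOrder

namespace Matrix

variable {m n : Type*} [Fintype m] [Fintype n]

lemma PosSemidef.transpose_mul_mul_same {M : Matrix m m ℝ} (hM : M.PosSemidef)
    (A : Matrix m n ℝ) : (Aᵀ * M * A).PosSemidef := by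
  simpa using hM.conjTranspose_mul_mul_same A

variable [DecidableEq m] [DecidableEq n]

lemma PosSemidef.one_le_det_one_add {N : Matrix n n ℝ} (hN : N.PosSemidef) :
    1 ≤ (1 + N).det := by
  have hH := (PosSemidef.one.add hN).isHermitian
  rw [hH.det_eq_prod_eigenvalues]
  refine Finset.one_le_prod fun i _ ↦ ?_
  have hmem : hH.eigenvalues i ∈ ({1} : Set ℝ) + spectrum ℝ N := by
    rw [spectrum.singleton_add_eq, map_one]
    exact hH.eigenvalues_mem_spectrum_real i
  obtain ⟨_, rfl, μ, hμ, hsum⟩ := hmem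
  have : 0 ≤ μ := (posSemidef_iff_isHermitian_and_spectrum_nonneg.mp hN).2 hμ
  simp only [RCLike.ofReal_real_eq_id, id_eq]
  linarith

lemma PosDef.det_le_det_of_posSemidef_sub {Q R : Matrix n n ℝ} (hQ : Q.PosDef)
    (hQR : (R - Q).PosSemidef) : Q.det ≤ R.det := by
  obtain ⟨B, rfl⟩ := CStarAlgebra.nonneg_iff_eq_star_mul_self.mp hQ.posSemidef.nonneg
  have hB : IsUnit B.det := (isUnit_iff_isUnit_det B).mp (isUnit_of_mul_isUnit_right hQ.isUnit)
  have hBinv : Bᴴ * B⁻¹ᴴ = 1 := by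
    rw [← conjTranspose_mul, nonsing_inv_mul _ hB, conjTranspose_one]
  have hR : R = star B * (1 + B⁻¹ᴴ * (R - star B * B) * B⁻¹) * B := by
    rw [star_eq_conjTranspose]
    simp only [Matrix.mul_add, Matrix.add_mul, Matrix.mul_one, ← Matrix.mul_assoc, hBinv,
      Matrix.one_mul]
    rw [Matrix.mul_assoc _ B⁻¹, nonsing_inv_mul _ hB, Matrix.mul_one]
    abel
  have hN := (hQR.conjTranspose_mul_mul_same B⁻¹).one_le_det_one_add
  rw [hR, det_mul, det_mul, det_mul, mul_right_comm]
  exact le_mul_of_one_le_right (det_mul (star B) B ▸ hQ.det_pos).le hN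

section CommRing

variable {α : Type*} [CommRing α] {P : Matrix n n α} {W : Matrix m m α}

lemma det_add_mul_mul (A : Matrix m n α) (B : Matrix n m α) (hP : IsUnit P.det)
    (hW : IsUnit W.det) : (W + A * P * B).det = W.det * P.det * (P⁻¹ + B * W⁻¹ * A).det := by
  have hS : (P⁻¹ + B * W⁻¹ * A) * P = 1 + B * W⁻¹ * (A * P) := by
    rw [Matrix.add_mul, nonsing_inv_mul _ hP, Matrix.mul_assoc]
  rw [det_add_mul (A * P) B hW, mul_assoc, mul_comm P.det, ← det_mul, hS]

lemma inv_add_mul_inv_mul_eq_sub (A : Matrix m n α) (B : Matrix n m α) (hP : IsUnit P)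
    (hW : IsUnit W) (hWP : IsUnit (W + A * P * B)) :
    (P⁻¹ + B * W⁻¹ * A)⁻¹ = P - P * B * (W + A * P * B)⁻¹ * A * P := by
  have hP' := nonsing_inv_nonsing_inv P ((isUnit_iff_isUnit_det P).mp hP)
  have hW' := nonsing_inv_nonsing_inv W ((isUnit_iff_isUnit_det W).mp hW)
  have := add_mul_mul_inv_eq_sub P⁻¹ B W⁻¹ A (isUnit_nonsing_inv_iff.mpr hP)
    (isUnit_nonsing_inv_iff.mpr hW) (by rwa [hP', hW'])
  rwa [hP', hW'] at this

end CommRing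

variable {A : Matrix m n ℝ} {P : Matrix n n ℝ} {W : Matrix m m ℝ}

lemma PosDef.inv_add_transpose_mul_inv_mul (hP : P.PosDef) (hW : W.PosDef) :
    (P⁻¹ + Aᵀ * W⁻¹ * A).PosDef :=
  hP.inv.add_posSemidef (hW.inv.posSemidef.transpose_mul_mul_same A)

lemma posSemidef_fromBlocks_iff_posSemidef_sub (hP : P.PosDef) (hW : W.PosDef)
    (Q : Matrix n n ℝ) :
    (fromBlocks (P - Q) (P * Aᵀ) (A * P) (W + A * P * Aᵀ)).PosSemidef ↔
      ((P⁻¹ + Aᵀ * W⁻¹ * A)⁻¹ - Q).PosSemidef := by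
  have hD : (W + A * P * Aᵀ).PosDef := by
    simpa using hW.add_posSemidef (hP.posSemidef.transpose_mul_mul_same Aᵀ)
  obtain ⟨_⟩ := hD.isUnit.nonempty_invertible
  have hPA : (P * Aᵀ)ᴴ = A * P := by simp [(isHermitian_iff_isSymm.mp hP.isHermitian).eq]
  have hSchur := PosDef.fromBlocks₂₂ (P - Q) (P * Aᵀ) hD
  rw [hPA] at hSchur
  rw [hSchur, inv_add_mul_inv_mul_eq_sub A Aᵀ hP.isUnit hW.isUnit hD.isUnit, sub_right_comm]
  simp only [Matrix.mul_assoc]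

lemma PosSemidef.fromBlocks_inv_add_transpose_mul_inv_mul (hP : P.PosDef) (hW : W.PosDef) :
    (fromBlocks (P - (P⁻¹ + Aᵀ * W⁻¹ * A)⁻¹) (P * Aᵀ) (A * P) (W + A * P * Aᵀ)).PosSemidef := by
  rw [posSemidef_fromBlocks_iff_posSemidef_sub hP hW, sub_self]
  exact .zero

end Matrix

lemma isLeast_stageFeasValues {n : ℕ} {A P W : Matrix (Fin n) (Fin n) ℝ} (hP : P.PosDef)
    (hW : W.PosDef) :
    IsLeast (stageFeasValues n A P W) (-(1 / 2) * Real.log ((P⁻¹ + Aᵀ * W⁻¹ * A)⁻¹).det) := by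
  refine ⟨⟨_, (hP.inv_add_transpose_mul_inv_mul hW).inv,
    PosSemidef.fromBlocks_inv_add_transpose_mul_inv_mul hP hW, rfl⟩, ?_⟩
  rintro _ ⟨Q, hQ, hfeas, rfl⟩
  have hdet := hQ.det_le_det_of_posSemidef_sub
    ((posSemidef_fromBlocks_iff_posSemidef_sub hP hW Q).mp hfeas)
  have := Real.log_le_log hQ.det_pos hdet
  linarith

theorem stage_cost_sdp_general (n : ℕ) (A P W : Matrix (Fin n) (Fin n) ℝ)
    (hP : P.PosDef) (hW : W.PosDef) :
    (1 / 2) * Real.log (A * P * Aᵀ + W).det - (1 / 2) * Real.log P.det =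
      (1 / 2) * Real.log W.det + sInf (stageFeasValues n A P W) ∧
    ((P⁻¹ + Aᵀ * W⁻¹ * A)⁻¹).PosDef ∧
    (fromBlocks (P - (P⁻¹ + Aᵀ * W⁻¹ * A)⁻¹) (P * Aᵀ) (A * P)
        (W + A * P * Aᵀ)).PosSemidef ∧
    sInf (stageFeasValues n A P W) =
      -(1 / 2) * Real.log ((P⁻¹ + Aᵀ * W⁻¹ * A)⁻¹).det := by
  have hS : (P⁻¹ + Aᵀ * W⁻¹ * A).PosDef := hP.inv_add_transpose_mul_inv_mul hW
  have hmin := (isLeast_stageFeasValues (A := A) hP hW).csInf_eq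
  refine ⟨?_, hS.inv, PosSemidef.fromBlocks_inv_add_transpose_mul_inv_mul hP hW, hmin⟩
  rw [hmin, add_comm, det_add_mul_mul A Aᵀ hP.det_pos.ne'.isUnit hW.det_pos.ne'.isUnit,
    Real.log_mul (by positivity [hW.det_pos, hP.det_pos]) hS.det_pos.ne',
    Real.log_mul hW.det_pos.ne' hP.det_pos.ne', det_nonsing_inv, Ring.inverse_eq_inv',
    Real.log_inv]
  ring

/-- For `A` an `n × n` real matrix and `P`, `W` symmetric positive
definite, `½ log det (A P Aᵀ + W) − ½ log det P` equals
`½ log det W + inf {−½ log det Q : Q ≻ 0, [[P − Q, P Aᵀ],[A P, W + A P Aᵀ]] ⪰ 0}`,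
and the infimum is attained at `Q = (P⁻¹ + Aᵀ W⁻¹ A)⁻¹`. -/
theorem stage_cost_sdp (n : ℕ) (hn : 0 < n) (A P W : Matrix (Fin n) (Fin n) ℝ)
    (hP : P.PosDef) (hW : W.PosDef) :
    (1 / 2) * Real.log (A * P * Aᵀ + W).det - (1 / 2) * Real.log P.det =
      (1 / 2) * Real.log W.det + sInf (stageFeasValues n A P W) ∧
    ((P⁻¹ + Aᵀ * W⁻¹ * A)⁻¹).PosDef ∧
    (fromBlocks (P - (P⁻¹ + Aᵀ * W⁻¹ * A)⁻¹) (P * Aᵀ) (A * P)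
        (W + A * P * Aᵀ)).PosSemidef ∧
    sInf (stageFeasValues n A P W) =
      -(1 / 2) * Real.log ((P⁻¹ + Aᵀ * W⁻¹ * A)⁻¹).det :=
  stage_cost_sdp_general n A P W hP hW
end

section
/- Fix integers T ≥ 1 and n ≥ 1, matrices A_t ∈ ℝ^{n×n} and symmetric positive definite W_t (t = 0,…,T−1), a symmetric positive definite P_0, and symmetric positive semidefinite Θ_t and reals D_t > 0 (t = 1,…,T). Then the max-det problem is strictly feasible: there exists δ > 0 such that the tuple with P_t = δ I for t = 1,…,T−1 and Π_t = δ² I for t = 1,…,T and P_T = δ² I satisfies all the constraints of the max-det feasible set F, with the matrix inequalities P_{t+1} ≺ A_t P_t A_tᵀ + W_t and [[P_t − Π_t, P_t A_tᵀ],[A_t P_t, W_t + A_t P_t A_tᵀ]] ≻ 0 holding strictly and Tr(Θ_t P_t) < D_t. -/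
/-!
Since `A P Aᵀ ⪰ 0`, the dynamics constraint follows from `W t - P (t + 1) ≻ 0`, and by the Schur
complement of the block `(δ - δ²) I` the block constraint follows from
`W t - δ² / (1 - δ) • A t (A t)ᵀ ≻ 0`. Both are perturbations of `W t ≻ 0` vanishing as `δ → 0`,
as are the trace constraints `δ Tr Θ t < D t`. Positive definiteness is an open condition among
symmetric matrices, so the finitely many constraints hold simultaneously for all small `δ > 0`.
-/

open Matrix Filter Topology

theorem tendsto_nhdsGT_zero_of_continuousAt {f : ℝ → ℝ} (hf : ContinuousAt f 0)
    (hf0 : f 0 = 0) : Tendsto f (𝓝[>] 0) (𝓝 0) :=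
  (hf0 ▸ hf.tendsto).mono_left nhdsWithin_le_nhds

namespace Matrix

variable {m n : Type*} [Fintype m] [Fintype n]

theorem PosDef.eventually_posDef {M : Matrix n n ℝ} (hM : M.PosDef) :
    ∀ᶠ N in 𝓝 M, N.IsHermitian → N.PosDef := by
  have hsphere : ∀ᶠ N in 𝓝 M, ∀ x ∈ Metric.sphere (0 : n → ℝ) 1, 0 < x ⬝ᵥ N *ᵥ x := by
    refine (isCompact_sphere 0 1).eventually_forall_of_forall_eventually fun x hx => ?_
    have hcont : Continuous fun p : Matrix n n ℝ × (n → ℝ) => p.2 ⬝ᵥ p.1 *ᵥ p.2 :=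
      continuous_snd.dotProduct (continuous_fst.matrix_mulVec continuous_snd)
    have hx0 : x ≠ 0 := ne_zero_of_mem_unit_sphere ⟨x, hx⟩
    exact hcont.continuousAt.eventually_const_lt (by simpa using hM.dotProduct_mulVec_pos hx0)
  filter_upwards [hsphere] with N hN hNherm
  refine .of_dotProduct_mulVec_pos hNherm fun x hx => ?_
  have hunit : ‖x‖⁻¹ • x ∈ Metric.sphere (0 : n → ℝ) 1 := by
    simp [norm_smul, inv_mul_cancel₀ (norm_ne_zero_iff.mpr hx)]
  have hpos := hN _ hunit
  rw [smul_dotProduct, mulVec_smul, dotProduct_smul, smul_smul, smul_eq_mul] at hpos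
  simpa using pos_of_mul_pos_right hpos (by positivity)

theorem PosDef.eventually_sub_smul {M N : Matrix n n ℝ} (hM : M.PosDef) (hN : N.IsHermitian)
    {α : Type*} {l : Filter α} {c : α → ℝ} (hc : Tendsto c l (𝓝 0)) :
    ∀ᶠ a in l, (M - c a • N).PosDef := by
  have hlim : Tendsto (fun a => M - c a • N) l (𝓝 M) := by
    simpa using tendsto_const_nhds.sub (hc.smul_const N)
  filter_upwards [hlim.eventually hM.eventually_posDef] with a ha
  exact ha (hM.1.sub (hN.smul (IsSelfAdjoint.all _)))

theorem PosDef.fromBlocks_of_schur [DecidableEq m] {A : Matrix m m ℝ} (B : Matrix m n ℝ)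
    (D : Matrix n n ℝ) (hA : A.PosDef) [Invertible A] (hS : (D - Bᴴ * A⁻¹ * B).PosDef) :
    (fromBlocks A B Bᴴ D).PosDef := by
  refine .of_dotProduct_mulVec_pos ((IsHermitian.fromBlocks₁₁ B D hA.1).mpr hS.1) fun x hx => ?_
  rw [← Sum.elim_comp_inl_inr x, dotProduct_mulVec, schur_complement_eq₁₁ B D _ _ hA.1,
    ← dotProduct_mulVec, ← dotProduct_mulVec]
  by_cases hz : x ∘ Sum.inr = 0
  · have hy : x ∘ Sum.inl ≠ 0 := by
      contrapose! hx
      rw [← Sum.elim_comp_inl_inr x, hx, hz]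
      ext (i | i) <;> rfl
    simpa [hz] using hA.dotProduct_mulVec_pos hy
  · exact add_pos_of_nonneg_of_pos (hA.posSemidef.dotProduct_mulVec_nonneg _)
      (hS.dotProduct_mulVec_pos hz)

theorem posDef_fromBlocks_smul_one [DecidableEq m] {a : ℝ} (ha : 0 < a) (B : Matrix m n ℝ)
    (D : Matrix n n ℝ) (hS : (D - a⁻¹ • (Bᴴ * B)).PosDef) :
    (fromBlocks (a • 1) B Bᴴ D).PosDef := by
  have hinv : (a • 1 : Matrix m m ℝ) * (a⁻¹ • 1) = 1 := by
    rw [smul_mul_smul, mul_inv_cancel₀ ha.ne', one_smul, one_mul]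
  let := invertibleOfRightInverse _ _ hinv
  refine (PosDef.one.smul ha).fromBlocks_of_schur B D ?_
  rw [inv_eq_right_inv hinv]
  simpa using hS

end Matrix

theorem posDef_fromBlocks_smul_one_of_lt_one {n : Type*} [Fintype n] [DecidableEq n] {δ : ℝ}
    (hδ0 : 0 < δ) (hδ1 : δ < 1) (A W : Matrix n n ℝ)
    (h : (W - (δ ^ 2 / (1 - δ)) • (A * Aᵀ)).PosDef) :
    (fromBlocks (δ • 1 - δ ^ 2 • 1) (δ • 1 * Aᵀ) (A * δ • 1) (W + A * δ • 1 * Aᵀ)).PosDef := by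
  have hblock : fromBlocks (δ • 1 - δ ^ 2 • 1) (δ • 1 * Aᵀ) (A * δ • 1) (W + A * δ • 1 * Aᵀ) =
      fromBlocks ((δ - δ ^ 2) • 1) (δ • Aᵀ) (δ • Aᵀ)ᴴ (W + A * δ • 1 * Aᵀ) := by
    simp [sub_smul]
  rw [hblock]
  refine posDef_fromBlocks_smul_one (by nlinarith) _ _ ?_
  -- the Schur complement is `W + δ A Aᵀ - δ² / (δ - δ²) • A Aᵀ = W - δ² / (1 - δ) • A Aᵀ`
  convert h using 1
  simp only [conjTranspose_eq_transpose_of_trivial, transpose_smul, transpose_transpose,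
    mul_smul_comm, smul_mul_assoc, mul_one, smul_smul]
  rw [add_sub_assoc, sub_eq_add_neg W, ← sub_smul, ← neg_smul]
  congr 2
  have : 1 - δ ≠ 0 := by linarith
  field_simp
  ring

theorem eventually_stage_constraints {n : Type*} [Fintype n] [DecidableEq n] {W : Matrix n n ℝ}
    (A Θ : Matrix n n ℝ) (hW : W.PosDef) {d : ℝ} (hd : 0 < d) :
    ∀ᶠ δ in 𝓝[>] (0 : ℝ), (W - δ • 1).PosDef ∧ (W - δ ^ 2 • 1).PosDef ∧
      (W - (δ ^ 2 / (1 - δ)) • (A * Aᵀ)).PosDef ∧ δ * Θ.trace < d ∧ δ ^ 2 * Θ.trace < d := by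
  have hlim {f : ℝ → ℝ} (hf : ContinuousAt f 0) (hf0 : f 0 = 0) :=
    tendsto_nhdsGT_zero_of_continuousAt hf hf0
  exact (hW.eventually_sub_smul isHermitian_one (hlim continuousAt_id rfl)).and <|
    (hW.eventually_sub_smul isHermitian_one (hlim (by fun_prop) (by simp))).and <|
    (hW.eventually_sub_smul (isHermitian_mul_conjTranspose_self A)
      (hlim (by fun_prop (disch := norm_num)) (by simp))).and <|
    ((hlim (by fun_prop) (by simp)).eventually_lt_const hd).and
    ((hlim (by fun_prop) (by simp)).eventually_lt_const hd)

theorem maxdet_strictly_feasible_general (n T : ℕ) (hT : 1 ≤ T)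
    (A W Θ : ℕ → Matrix (Fin n) (Fin n) ℝ) (P₀ : Matrix (Fin n) (Fin n) ℝ)
    (D : ℕ → ℝ)
    (hW : ∀ t, t < T → (W t).PosDef) (hP₀ : P₀.PosDef)
    (hD : ∀ t, 1 ≤ t → t ≤ T → 0 < D t) :
    ∃ δ : ℝ, 0 < δ ∧
      ∀ P Q : ℕ → Matrix (Fin n) (Fin n) ℝ,
        (P = fun t => if t = 0 then P₀
          else if t < T then δ • (1 : Matrix (Fin n) (Fin n) ℝ)
          else δ ^ 2 • (1 : Matrix (Fin n) (Fin n) ℝ)) →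
        (Q = fun _ => δ ^ 2 • (1 : Matrix (Fin n) (Fin n) ℝ)) →
        (∀ t, 1 ≤ t → t ≤ T → (Q t).PosDef) ∧
        (∀ t, t < T → (A t * P t * (A t)ᵀ + W t - P (t + 1)).PosDef) ∧
        (∀ t, 1 ≤ t → t < T →
          (fromBlocks (P t - Q t) (P t * (A t)ᵀ) (A t * P t)
            (W t + A t * P t * (A t)ᵀ)).PosDef) ∧
        (∀ t, 1 ≤ t → t ≤ T → (Θ t * P t).trace < D t) ∧
        P T = Q T := by
  have hsmall : ∀ᶠ δ in 𝓝[>] (0 : ℝ), δ < 1 ∧ ∀ t ∈ Finset.range T,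
      (W t - δ • 1).PosDef ∧ (W t - δ ^ 2 • 1).PosDef ∧
      (W t - (δ ^ 2 / (1 - δ)) • (A t * (A t)ᵀ)).PosDef ∧
      δ * (Θ (t + 1)).trace < D (t + 1) ∧ δ ^ 2 * (Θ (t + 1)).trace < D (t + 1) :=
    ((tendsto_nhdsGT_zero_of_continuousAt continuousAt_id rfl).eventually_lt_const one_pos).and <|
      (Finset.range T).eventually_all.mpr fun t ht =>
      eventually_stage_constraints (A t) (Θ (t + 1)) (hW t (Finset.mem_range.mp ht))
        (hD (t + 1) (by omega) (Finset.mem_range.mp ht))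
  obtain ⟨δ, ⟨hδ1, hδt⟩, hδ0⟩ := (hsmall.and self_mem_nhdsWithin).exists
  refine ⟨δ, hδ0, fun P Q hP hQ => ?_⟩
  have hP_psd (t : ℕ) : (P t).PosSemidef := by
    rw [hP]; dsimp only; split_ifs
    exacts [hP₀.posSemidef, (PosDef.one.smul hδ0).posSemidef,
      (PosDef.one.smul (by positivity)).posSemidef]
  have hP_succ (t : ℕ) : P (t + 1) = δ • 1 ∨ P (t + 1) = δ ^ 2 • 1 := by
    rw [hP]; dsimp only; split_ifs <;> simp_all
  refine ⟨fun t _ _ => hQ ▸ PosDef.one.smul (by positivity), fun t ht => ?_, fun t ht1 ht => ?_,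
    fun t ht1 ht => ?_, by simp [hP, hQ]; omega⟩
  · obtain ⟨hWδ, hWδ2, -⟩ := hδt t (Finset.mem_range.mpr ht)
    have hWP : (W t - P (t + 1)).PosDef := by
      rcases hP_succ t with h | h <;> rw [h]
      exacts [hWδ, hWδ2]
    simpa [add_sub_right_comm, add_comm] using
      hWP.add_posSemidef ((hP_psd t).mul_mul_conjTranspose_same (A t))
  · have hPt : P t = δ • 1 := by rw [hP]; dsimp only; rw [if_neg (by omega), if_pos ht]
    rw [hPt, hQ]
    exact posDef_fromBlocks_smul_one_of_lt_one hδ0 hδ1 _ _ (hδt t (Finset.mem_range.mpr ht)).2.2.1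
  · obtain ⟨s, rfl⟩ := Nat.exists_eq_add_of_le' ht1
    obtain ⟨-, -, -, hδD, hδ2D⟩ := hδt s (Finset.mem_range.mpr ht)
    rcases hP_succ s with h | h
    · simpa [h, trace_smul] using hδD
    · simpa [h, trace_smul] using hδ2D

/-- (Strict feasibility of the max-det problem.) There exists `δ > 0`
such that the tuple with `P t = δ I` for `t = 1, …, T−1`, `P T = δ² I` and `Π t = δ² I`
for `t = 1, …, T` satisfies all the constraints of the max-det feasible set, with the
matrix inequality constraints holding strictly and the trace constraints strictly. -/
theorem maxdet_strictly_feasible (n T : ℕ) (hn : 0 < n) (hT : 1 ≤ T)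
    (A W Θ : ℕ → Matrix (Fin n) (Fin n) ℝ) (P₀ : Matrix (Fin n) (Fin n) ℝ)
    (D : ℕ → ℝ)
    (hW : ∀ t, t < T → (W t).PosDef) (hP₀ : P₀.PosDef)
    (hΘ : ∀ t, 1 ≤ t → t ≤ T → (Θ t).PosSemidef)
    (hD : ∀ t, 1 ≤ t → t ≤ T → 0 < D t) :
    ∃ δ : ℝ, 0 < δ ∧
      ∀ P Q : ℕ → Matrix (Fin n) (Fin n) ℝ,
        (P = fun t => if t = 0 then P₀
          else if t < T then δ • (1 : Matrix (Fin n) (Fin n) ℝ)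
          else δ ^ 2 • (1 : Matrix (Fin n) (Fin n) ℝ)) →
        (Q = fun _ => δ ^ 2 • (1 : Matrix (Fin n) (Fin n) ℝ)) →
        (∀ t, 1 ≤ t → t ≤ T → (Q t).PosDef) ∧
        (∀ t, t < T → (A t * P t * (A t)ᵀ + W t - P (t + 1)).PosDef) ∧
        (∀ t, 1 ≤ t → t < T →
          (fromBlocks (P t - Q t) (P t * (A t)ᵀ) (A t * P t)
            (W t + A t * P t * (A t)ᵀ)).PosDef) ∧
        (∀ t, 1 ≤ t → t ≤ T → (Θ t * P t).trace < D t) ∧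
        P T = Q T :=
  maxdet_strictly_feasible_general n T hT A W Θ P₀ D hW hP₀ hD
end

section
/- Let a ∈ ℝ and w > 0, D > 0 be reals. Then the infimum of log(a² + w/p) over the set of reals p with 0 < p, p ≤ a²·p + w, and p ≤ D equals max{0, log(a² + w/D)}. -/
/-!
Writing `c = a²`, the constraint `p ≤ c p + w` says exactly `1 ≤ c + w / p`, so the objective
`log (c + w / p)` is nonnegative, and `p ≤ D` bounds it below by `log (c + w / D)`. The larger of the
two bounds is attained: by `p = D` when it is feasible, and otherwise (then `c < 1`) by the fixed
point `p = w / (1 - c)` of `p ↦ c p + w`, where the objective is `log 1 = 0`.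
-/

open Real

lemma le_mul_add_iff_one_le_add_div {c w p : ℝ} (hp : 0 < p) :
    p ≤ c * p + w ↔ 1 ≤ c + w / p := by
  rw [show c + w / p = (c * p + w) / p by field_simp, le_div_iff₀ hp, one_mul]

lemma max_zero_log_le_log_add_div {c w D p : ℝ} (hc : 0 ≤ c) (hw : 0 < w) (hp : 0 < p)
    (hfix : p ≤ c * p + w) (hpD : p ≤ D) :
    max 0 (log (c + w / D)) ≤ log (c + w / p) := by
  have hD : 0 < D := hp.trans_le hpD
  refine max_le (log_nonneg ((le_mul_add_iff_one_le_add_div hp).1 hfix)) ?_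
  gcongr

lemma exists_le_mul_add_log_add_div_eq_max {c w D : ℝ} (hc : 0 ≤ c) (hw : 0 < w) (hD : 0 < D) :
    ∃ p, 0 < p ∧ p ≤ c * p + w ∧ p ≤ D ∧ max 0 (log (c + w / D)) = log (c + w / p) := by
  rcases le_or_gt 1 (c + w / D) with hfeas | hinfeas
  · exact ⟨D, hD, (le_mul_add_iff_one_le_add_div hD).2 hfeas, le_rfl,
      max_eq_right (log_nonneg hfeas)⟩
  · have hwD : w / D < 1 - c := by linarith
    have hc1 : 0 < 1 - c := (div_pos hw hD).trans hwD
    have hfixed : c + w / (w / (1 - c)) = 1 := by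
      rw [div_div_cancel₀ hw.ne']
      ring
    refine ⟨w / (1 - c), div_pos hw hc1, ?_, ?_, ?_⟩
    · rw [le_mul_add_iff_one_le_add_div (div_pos hw hc1), hfixed]
    · rw [div_lt_iff₀ hD] at hwD
      rw [div_le_iff₀ hc1]
      linarith
    · rw [hfixed, log_one]
      exact max_eq_left (log_nonpos (by positivity) hinfeas.le)

/-- For reals `a`, `w > 0`, `D > 0`, the infimum of `log (a² + w/p)`
over reals `p` with `0 < p`, `p ≤ a² p + w`, `p ≤ D`, equals `max 0 (log (a² + w/D))`. -/
theorem scalar_stationary_srd (a w D : ℝ) (hw : 0 < w) (hD : 0 < D) :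
    sInf {x : ℝ | ∃ p : ℝ, 0 < p ∧ p ≤ a ^ 2 * p + w ∧ p ≤ D ∧
        x = Real.log (a ^ 2 + w / p)} =
      max 0 (Real.log (a ^ 2 + w / D)) := by
  obtain ⟨p, hp, hfix, hpD, hval⟩ := exists_le_mul_add_log_add_div_eq_max (sq_nonneg a) hw hD
  refine IsLeast.csInf_eq ⟨⟨p, hp, hfix, hpD, hval⟩, ?_⟩
  rintro _ ⟨q, hq, hqfix, hqD, rfl⟩
  exact max_zero_log_le_log_add_div (sq_nonneg a) hw hq hqfix hqD
end

section
/- Let a ∈ ℝ and w > 0, D > 0 be reals. Consider the scalar semidefinite representation: minimize −½ log π + ½ log w over pairs of reals (p, π) satisfying π > 0, p ≤ a²·p + w, p ≤ D, and the 2×2 matrix [[p − π, p·a],[a·p, a²·p + w]] positive semidefinite. Then the optimal value (infimum) equals max{0, ½ log(a² + w/D)}. -/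
/-!
With `c = a² + w / D`, the objective is `½ log (w / q)`. By the Schur complement the matrix
constraint says `q ≤ p` and `q (a² p + w) ≤ p w`, i.e. `q ≤ w / (a² + w / p)`; with `p ≤ D` this
gives `q ≤ w / c`, and with `p ≤ a² p + w` it gives `q ≤ w`. The bound `q = w / max 1 c` is
attained at `p = D` when `c ≥ 1`, and at the fixed point `p = w / (1 - a²)` of
`p ↦ a² p + w` when `c < 1`.
-/

open Real

theorem Matrix.posSemidef_fin_two_iff {A B C : ℝ} :
    (!![A, B; B, C]).PosSemidef ↔ 0 ≤ A ∧ 0 ≤ C ∧ B ^ 2 ≤ A * C := by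
  constructor
  · intro h
    refine ⟨by simpa using h.diag_nonneg (i := 0), by simpa using h.diag_nonneg (i := 1), ?_⟩
    have := h.det_nonneg
    rw [Matrix.det_fin_two_of] at this
    linarith
  · rintro ⟨hA, hC, hdet⟩
    refine .of_dotProduct_mulVec_nonneg ?_ fun x ↦ ?_
    · ext i j
      fin_cases i <;> fin_cases j <;> rfl
    · simp only [Matrix.mulVec, dotProduct, Fin.sum_univ_two, star_trivial, Matrix.of_apply,
        Matrix.cons_val', Matrix.cons_val_zero, Matrix.cons_val_one, Matrix.empty_val',
        Matrix.cons_val_fin_one]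
      -- `A · (A x² + 2Bxy + Cy²) = (Ax + By)² + (AC - B²) y²`
      rcases hA.eq_or_lt with rfl | hA
      · obtain rfl : B = 0 := by nlinarith
        nlinarith [mul_nonneg hC (sq_nonneg (x 1))]
      · nlinarith [sq_nonneg (A * x 0 + B * x 1), mul_nonneg (sub_nonneg.2 hdet) (sq_nonneg (x 1))]

section SequentialRateDistortion

variable {a w D p q : ℝ}

theorem srd_posSemidef_iff (hq : 0 < q) (hp : p ≤ a ^ 2 * p + w) :
    (!![p - q, p * a; a * p, a ^ 2 * p + w]).PosSemidef ↔ q ≤ p ∧ q * (a ^ 2 * p + w) ≤ p * w := by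
  rw [mul_comm a p, Matrix.posSemidef_fin_two_iff, sub_nonneg]
  have key : (p - q) * (a ^ 2 * p + w) - (p * a) ^ 2 = p * w - q * (a ^ 2 * p + w) := by ring
  constructor
  · rintro ⟨hqp, -, hdet⟩
    exact ⟨hqp, by linarith⟩
  · rintro ⟨hqp, hdet⟩
    exact ⟨hqp, by linarith, by linarith⟩

theorem max_one_le_div_of_srd_feasible (hw : 0 < w) (hq : 0 < q)
    (hp : p ≤ a ^ 2 * p + w) (hpD : p ≤ D) (hqp : q ≤ p) (hdet : q * (a ^ 2 * p + w) ≤ p * w) :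
    max 1 (a ^ 2 + w / D) ≤ w / q := by
  have hp0 : 0 < p := hq.trans_le hqp
  have hpw : 0 < a ^ 2 * p + w := hp0.trans_le hp
  rw [le_div_iff₀ hq, mul_comm, mul_max_of_nonneg _ _ hq.le, mul_one, max_le_iff]
  constructor
  · refine le_of_mul_le_mul_right ?_ hpw
    nlinarith
  · have : w / D ≤ w / p := div_le_div_of_nonneg_left hw.le hp0 hpD
    calc q * (a ^ 2 + w / D) ≤ q * (a ^ 2 + w / p) := by gcongr
      _ = q * (a ^ 2 * p + w) / p := by field_simp
      _ ≤ w := by rw [div_le_iff₀ hp0]; linarith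

theorem exists_srd_feasible (hw : 0 < w) (hD : 0 < D) :
    ∃ p, p ≤ a ^ 2 * p + w ∧ p ≤ D ∧ w / max 1 (a ^ 2 + w / D) ≤ p ∧
      w / max 1 (a ^ 2 + w / D) * (a ^ 2 * p + w) ≤ p * w := by
  have hwD : w / D * D = w := div_mul_cancel₀ w hD.ne'
  rcases le_or_gt 1 (a ^ 2 + w / D) with hc | hc
  · have hK : 0 < a ^ 2 * D + w := by positivity
    have hq : w / (a ^ 2 + w / D) = D * w / (a ^ 2 * D + w) := by field_simp
    rw [max_eq_right hc, hq]
    refine ⟨D, by nlinarith, le_rfl, ?_, ?_⟩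
    · rw [div_le_iff₀ hK]
      nlinarith [mul_nonneg (mul_nonneg hD.le (sq_nonneg a)) hD.le]
    · rw [div_mul_cancel₀ _ hK.ne']
  · have ha : 0 < 1 - a ^ 2 := by nlinarith [div_pos hw hD]
    have hp : a ^ 2 * (w / (1 - a ^ 2)) + w = w / (1 - a ^ 2) := by field_simp; ring
    rw [max_eq_left hc.le, div_one]
    refine ⟨w / (1 - a ^ 2), hp.ge, ?_, ?_, by rw [hp, mul_comm]⟩
    · rw [div_le_iff₀ ha]
      nlinarith
    · rw [le_div_iff₀ ha]
      nlinarith [sq_nonneg a]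

theorem half_log_max_one {c : ℝ} (hc : 0 < c) :
    (1 / 2) * log (max 1 c) = max 0 ((1 / 2) * log c) := by
  rcases le_total 1 c with h | h
  · rw [max_eq_right h, max_eq_right (by have := log_nonneg h; positivity)]
  · rw [max_eq_left h, max_eq_left (by nlinarith [log_nonpos hc.le h]), log_one, mul_zero]

end SequentialRateDistortion

/-- For reals `a`, `w > 0`, `D > 0`, the infimum of
`−½ log q + ½ log w` over pairs `(p, q)` with `q > 0`, `p ≤ a² p + w`, `p ≤ D`, and
the 2×2 matrix `[[p − q, p a],[a p, a² p + w]]` positive semidefinite, equals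
`max 0 (½ log (a² + w/D))`. -/
theorem scalar_srd_sdp (a w D : ℝ) (hw : 0 < w) (hD : 0 < D) :
    sInf {x : ℝ | ∃ p q : ℝ, 0 < q ∧ p ≤ a ^ 2 * p + w ∧ p ≤ D ∧
        (!![p - q, p * a; a * p, a ^ 2 * p + w]).PosSemidef ∧
        x = -(1 / 2) * Real.log q + (1 / 2) * Real.log w} =
      max 0 ((1 / 2) * Real.log (a ^ 2 + w / D)) := by
  set c := a ^ 2 + w / D
  have hm : 0 < max 1 c := zero_lt_one.trans_le (le_max_left _ _)
  rw [← half_log_max_one (by positivity : 0 < c)]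
  refine IsLeast.csInf_eq ⟨?_, ?_⟩
  · obtain ⟨p, hp, hpD, hqp, hdet⟩ := exists_srd_feasible (a := a) hw hD
    refine ⟨p, w / max 1 c, by positivity, hp, hpD,
      (srd_posSemidef_iff (by positivity) hp).2 ⟨hqp, hdet⟩, ?_⟩
    rw [log_div hw.ne' hm.ne']
    ring
  · rintro x ⟨p, q, hq, hp, hpD, hpsd, rfl⟩
    obtain ⟨hqp, hdet⟩ := (srd_posSemidef_iff hq hp).1 hpsd
    have := log_le_log hm (max_one_le_div_of_srd_feasible hw hq hp hpD hqp hdet)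
    rw [log_div hw.ne' hq.ne'] at this
    linarith
end

section
/- Let n be a positive integer, c > 0 a real, and Λ a diagonal n×n real matrix with positive diagonal entries. Let P be a symmetric positive definite n×n real matrix with P ⪯ Λ, and let P_d be the diagonal matrix whose diagonal entries agree with those of P. Then P_d is positive definite, P_d ⪯ Λ, Tr(P_d) = Tr(P), det(P_d) ≥ det(P), and consequently Tr(P_d) − c·log det(P_d) ≤ Tr(P) − c·log det(P). -/
open Matrix

/-!
Hadamard's inequality via the LDL decomposition `P = L D Lᵀ`: `det P = ∏ i, L i i ^ 2 * D i`,
while `P i i = ∑ j, L i j ^ 2 * D j ≥ L i i ^ 2 * D i` because every `D j ≥ 0`.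
Since `P` and its diagonal part have the same trace, `det P ≤ det P_d` and monotonicity of `log`
then compare the objective values.
-/

namespace Matrix

section LDL

variable {n : Type*} [LinearOrder n] [WellFoundedLT n] [LocallyFiniteOrderBot n] [Fintype n]
  {S : Matrix n n ℝ}

theorem LDL.diagEntries_nonneg (hS : S.PosDef) (i : n) : 0 ≤ LDL.diagEntries hS i := by
  have hD : (diagonal (LDL.diagEntries hS)).PosSemidef := by
    rw [← LDL.diag, LDL.diag_eq_lowerInv_conj]
    exact hS.posSemidef.mul_mul_conjTranspose_same _
  exact posSemidef_diagonal_iff.mp hD i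

theorem LDL.lower_isLowerTriangular (hS : S.PosDef) : (LDL.lower hS).IsLowerTriangular :=
  blockTriangular_inv_of_blockTriangular fun _ _ h => LDL.lowerInv_triangular hS h

theorem LDL.lower_mul_diagonal_mul_transpose (hS : S.PosDef) :
    LDL.lower hS * diagonal (LDL.diagEntries hS) * (LDL.lower hS)ᵀ = S := by
  simpa only [LDL.diag, conjTranspose_eq_transpose_of_trivial] using LDL.lower_conj_diag hS

theorem LDL.det_eq_prod (hS : S.PosDef) :
    S.det = ∏ i, LDL.lower hS i i ^ 2 * LDL.diagEntries hS i := by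
  conv_lhs => rw [← LDL.lower_mul_diagonal_mul_transpose hS]
  rw [det_mul, det_mul, det_transpose, det_diagonal,
    det_of_isLowerTriangular _ (LDL.lower_isLowerTriangular hS),
    ← Finset.prod_mul_distrib, ← Finset.prod_mul_distrib]
  exact Finset.prod_congr rfl fun i _ => by ring

theorem LDL.apply_self_eq_sum (hS : S.PosDef) (i : n) :
    S i i = ∑ j, LDL.lower hS i j ^ 2 * LDL.diagEntries hS j := by
  conv_lhs => rw [← LDL.lower_mul_diagonal_mul_transpose hS]
  simp only [mul_apply (M := _ * _), mul_diagonal, transpose_apply]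
  exact Finset.sum_congr rfl fun j _ => by ring

theorem PosDef.det_le_prod_diag_of_linearOrder (hS : S.PosDef) : S.det ≤ ∏ i, S i i := by
  have hterm_nonneg (i j : n) : 0 ≤ LDL.lower hS i j ^ 2 * LDL.diagEntries hS j :=
    mul_nonneg (sq_nonneg _) (LDL.diagEntries_nonneg hS j)
  rw [LDL.det_eq_prod hS]
  refine Finset.prod_le_prod (fun i _ => hterm_nonneg i i) fun i _ => ?_
  rw [LDL.apply_self_eq_sum hS i]
  exact Finset.single_le_sum (fun j _ => hterm_nonneg i j) (Finset.mem_univ i)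

end LDL

theorem PosDef.det_le_prod_diag {n : Type*} [Fintype n] [DecidableEq n] {S : Matrix n n ℝ}
    (hS : S.PosDef) : S.det ≤ ∏ i, S i i := by
  let e := Fintype.equivFin n
  have hS' : (S.submatrix e.symm e.symm).PosDef := hS.submatrix e.symm.injective
  calc S.det = (S.submatrix e.symm e.symm).det := (det_submatrix_equiv_self e.symm S).symm
    _ ≤ ∏ i, S (e.symm i) (e.symm i) := hS'.det_le_prod_diag_of_linearOrder
    _ = ∏ i, S i i := e.symm.prod_comp fun i => S i i

end Matrix

theorem diagonal_restriction_general (n : ℕ) (c : ℝ) (hc : 0 < c)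
    (d : Fin n → ℝ)
    (P : Matrix (Fin n) (Fin n) ℝ) (hP : P.PosDef)
    (hPle : (Matrix.diagonal d - P).PosSemidef) :
    (Matrix.diagonal (fun i => P i i)).PosDef ∧
    (Matrix.diagonal d - Matrix.diagonal (fun i => P i i)).PosSemidef ∧
    (Matrix.diagonal (fun i => P i i)).trace = P.trace ∧
    P.det ≤ (Matrix.diagonal (fun i => P i i)).det ∧
    (Matrix.diagonal (fun i => P i i)).trace -
        c * Real.log (Matrix.diagonal (fun i => P i i)).det ≤
      P.trace - c * Real.log P.det := by
  have hPd : (diagonal fun i => P i i).PosDef := posDef_diagonal_iff.mpr fun _ => hP.diag_pos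
  have hle : (diagonal d - diagonal fun i => P i i).PosSemidef := by
    rw [diagonal_sub, posSemidef_diagonal_iff]
    intro i
    simpa using hPle.diag_nonneg (i := i)
  have htrace : (diagonal fun i => P i i).trace = P.trace := trace_diagonal _
  have hdet : P.det ≤ (diagonal fun i => P i i).det := by
    rw [det_diagonal]
    exact hP.det_le_prod_diag
  refine ⟨hPd, hle, htrace, hdet, ?_⟩
  rw [htrace]
  gcongr
  exact hP.det_pos

/-- Let `Λ = diagonal d` with `d i > 0`, `c > 0`, and let `P` be
symmetric positive definite with `P ⪯ Λ`. Let `P_d` be the diagonal matrix with the same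
diagonal as `P`. Then `P_d ≻ 0`, `P_d ⪯ Λ`, `Tr P_d = Tr P`, `det P ≤ det P_d`, and
consequently `Tr P_d − c log det P_d ≤ Tr P − c log det P`. -/
theorem diagonal_restriction (n : ℕ) (hn : 0 < n) (c : ℝ) (hc : 0 < c)
    (d : Fin n → ℝ) (hd : ∀ i, 0 < d i)
    (P : Matrix (Fin n) (Fin n) ℝ) (hP : P.PosDef)
    (hPle : (Matrix.diagonal d - P).PosSemidef) :
    (Matrix.diagonal (fun i => P i i)).PosDef ∧
    (Matrix.diagonal d - Matrix.diagonal (fun i => P i i)).PosSemidef ∧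
    (Matrix.diagonal (fun i => P i i)).trace = P.trace ∧
    P.det ≤ (Matrix.diagonal (fun i => P i i)).det ∧
    (Matrix.diagonal (fun i => P i i)).trace -
        c * Real.log (Matrix.diagonal (fun i => P i i)).det ≤
      P.trace - c * Real.log P.det :=
  diagonal_restriction_general n c hc d P hP hPle
end

section
/- Let n be a positive integer, α > 0 a real, and σ_1,…,σ_n > 0 reals; set Λ = diag(σ_1²,…,σ_n²) and P* = diag(min(1/α, σ_1²),…,min(1/α, σ_n²)). Then P* is positive definite, P* ⪯ Λ, and for every symmetric positive definite n×n matrix P with P ⪯ Λ one has Tr(P*) − (1/α)·log det(P*) ≤ Tr(P) − (1/α)·log det(P); that is, P* minimizes P ↦ Tr(P) − (1/α) log det(P) over {P : 0 ≺ P ⪯ Λ}. -/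
/-!
Write `q i = min (1 / α) (σ i ^ 2)` and `Q = diagonal q`. Conjugating `P` by `Q ^ (-1/2)` and
applying `log x ≤ x - 1` to the eigenvalues gives `log det P ≤ log det Q + Tr (Q⁻¹ P) - n`. Hence the
objective at `P` is bounded below by `Tr Q - (1 / α) log det Q` plus a sum of terms that depend only on
the diagonal entries `P i i ≤ σ i ^ 2`: the `i`-th one is `(P i i - q i) * (1 - 1 / (α q i))`, which
vanishes when `q i = 1 / α` and is a product of two nonpositive factors when `q i = σ i ^ 2`.
-/

open Matrix

namespace Matrix

variable {ι : Type*} [Fintype ι] [DecidableEq ι]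

theorem PosDef.log_det_le_trace_sub_card {M : Matrix ι ι ℝ} (hM : M.PosDef) :
    Real.log M.det ≤ M.trace - Fintype.card ι := by
  have hev := hM.eigenvalues_pos
  rw [hM.isHermitian.det_eq_prod_eigenvalues, hM.isHermitian.trace_eq_sum_eigenvalues]
  simp only [RCLike.ofReal_real_eq_id, id]
  rw [Real.log_prod fun i _ => (hev i).ne']
  calc ∑ i, Real.log (hM.isHermitian.eigenvalues i)
      ≤ ∑ i, (hM.isHermitian.eigenvalues i - 1) :=
        Finset.sum_le_sum fun i _ => Real.log_le_sub_one_of_pos (hev i)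
    _ = _ := by simp [Finset.sum_sub_distrib]

theorem PosDef.log_det_le_sum_log_add_sum_div {P : Matrix ι ι ℝ} (hP : P.PosDef) {q : ι → ℝ}
    (hq : ∀ i, 0 < q i) :
    Real.log P.det ≤ ∑ i, Real.log (q i) + ∑ i, (P i i / q i - 1) := by
  set d : ι → ℝ := fun i => Real.sqrt (q i)⁻¹
  have hd : ∀ i, 0 < d i := fun i => Real.sqrt_pos.2 (inv_pos.2 (hq i))
  have hd_sq : ∀ i, d i * d i = (q i)⁻¹ := fun i => Real.mul_self_sqrt (inv_pos.2 (hq i)).le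
  have hD : IsUnit (diagonal d) := by
    rw [isUnit_iff_isUnit_det, det_diagonal]
    exact (Finset.prod_pos fun i _ => hd i).ne'.isUnit
  have hM : (diagonal d * P * diagonal d).PosDef := by
    simpa [star_eq_conjTranspose, diagonal_conjTranspose] using
      hD.posDef_star_left_conjugate_iff.2 hP
  have key := hM.log_det_le_trace_sub_card
  have hdet : Real.log (diagonal d * P * diagonal d).det =
      Real.log P.det - ∑ i, Real.log (q i) := by
    rw [det_mul, det_mul, mul_right_comm, ← det_mul, diagonal_mul_diagonal, det_diagonal,
      Real.log_mul (Finset.prod_pos fun i _ => mul_pos (hd i) (hd i)).ne' hP.det_pos.ne',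
      Real.log_prod fun i _ => (mul_pos (hd i) (hd i)).ne']
    simp only [hd_sq, Real.log_inv, Finset.sum_neg_distrib]
    ring
  have htr : (diagonal d * P * diagonal d).trace = ∑ i, P i i / q i := by
    rw [trace_mul_cycle, diagonal_mul_diagonal, trace]
    simp [diagonal_mul, hd_sq, div_eq_inv_mul]
  rw [hdet, htr] at key
  simp only [Finset.sum_sub_distrib, Finset.sum_const, Finset.card_univ, nsmul_eq_mul, mul_one]
  linarith

end Matrix

theorem one_div_mul_div_min_sub_one_le_sub {α s p : ℝ} (hα : 0 < α) (hs : 0 < s) (hp : p ≤ s) :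
    1 / α * (p / min (1 / α) s - 1) ≤ p - min (1 / α) s := by
  rcases le_total (1 / α) s with h | h
  · rw [min_eq_left h]
    exact le_of_eq (by field_simp)
  · rw [min_eq_right h]
    have hαs : 1 ≤ 1 / (α * s) := one_le_one_div (by positivity) ((le_div_iff₀' hα).1 h)
    calc 1 / α * (p / s - 1) = (p - s) * (1 / (α * s)) := by field_simp
      _ ≤ (p - s) * 1 := mul_le_mul_of_nonpos_left hαs (sub_nonpos.2 hp)
      _ = p - s := mul_one _

theorem reverse_waterfilling_general (n : ℕ) (α : ℝ) (hα : 0 < α)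
    (σ : Fin n → ℝ) (hσ : ∀ i, 0 < σ i) :
    (Matrix.diagonal (fun i => min (1 / α) ((σ i) ^ 2))).PosDef ∧
    (Matrix.diagonal (fun i => (σ i) ^ 2) -
        Matrix.diagonal (fun i => min (1 / α) ((σ i) ^ 2))).PosSemidef ∧
    ∀ P : Matrix (Fin n) (Fin n) ℝ, P.PosDef →
      (Matrix.diagonal (fun i => (σ i) ^ 2) - P).PosSemidef →
      (Matrix.diagonal (fun i => min (1 / α) ((σ i) ^ 2))).trace -
          (1 / α) * Real.log (Matrix.diagonal (fun i => min (1 / α) ((σ i) ^ 2))).det ≤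
        P.trace - (1 / α) * Real.log P.det := by
  set q : Fin n → ℝ := fun i => min (1 / α) ((σ i) ^ 2)
  have hq : ∀ i, 0 < q i := fun i => lt_min (by positivity) (pow_pos (hσ i) 2)
  refine ⟨posDef_diagonal_iff.2 hq, ?_, fun P hP hPΛ => ?_⟩
  · rw [diagonal_sub]
    exact posSemidef_diagonal_iff.2 fun i => sub_nonneg.2 (min_le_right _ _)
  have hPσ (i : Fin n) : P i i ≤ σ i ^ 2 := by simpa using hPΛ.diag_nonneg (i := i)
  have hcoord : 1 / α * ∑ i, (P i i / q i - 1) ≤ P.trace - ∑ i, q i := by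
    rw [Finset.mul_sum, trace, ← Finset.sum_sub_distrib]
    exact Finset.sum_le_sum fun i _ =>
      one_div_mul_div_min_sub_one_le_sub hα (pow_pos (hσ i) 2) (hPσ i)
  rw [trace_diagonal, det_diagonal, Real.log_prod fun i _ => (hq i).ne']
  calc ∑ i, q i - 1 / α * ∑ i, Real.log (q i)
      ≤ P.trace - 1 / α * (∑ i, Real.log (q i) + ∑ i, (P i i / q i - 1)) := by linarith
    _ ≤ P.trace - 1 / α * Real.log P.det := by
      gcongr
      exact hP.log_det_le_sum_log_add_sum_div hq

/-- Let `Λ = diag (σ₁², …, σₙ²)` and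
`P* = diag (min (1/α) σ₁², …, min (1/α) σₙ²)` with `α > 0` and `σᵢ > 0`. Then `P* ≻ 0`,
`P* ⪯ Λ`, and `P*` minimizes `P ↦ Tr P − (1/α) log det P` over `{P : 0 ≺ P ⪯ Λ}`. -/
theorem reverse_waterfilling (n : ℕ) (hn : 0 < n) (α : ℝ) (hα : 0 < α)
    (σ : Fin n → ℝ) (hσ : ∀ i, 0 < σ i) :
    (Matrix.diagonal (fun i => min (1 / α) ((σ i) ^ 2))).PosDef ∧
    (Matrix.diagonal (fun i => (σ i) ^ 2) -
        Matrix.diagonal (fun i => min (1 / α) ((σ i) ^ 2))).PosSemidef ∧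
    ∀ P : Matrix (Fin n) (Fin n) ℝ, P.PosDef →
      (Matrix.diagonal (fun i => (σ i) ^ 2) - P).PosSemidef →
      (Matrix.diagonal (fun i => min (1 / α) ((σ i) ^ 2))).trace -
          (1 / α) * Real.log (Matrix.diagonal (fun i => min (1 / α) ((σ i) ^ 2))).det ≤
        P.trace - (1 / α) * Real.log P.det :=
  reverse_waterfilling_general n α hα σ hσ
end

section
/- Let n and k be positive integers, let μ be a Gaussian probability measure on ℝ^n with positive definite covariance matrix, and let E be a nonzero k×n real matrix. Let p be the pushforward of μ under the map x ↦ (x, E x), a probability measure on ℝ^n × ℝ^k, and let p_X and p_Y be its marginals. Then p is not absolutely continuous with respect to the product measure p_X × p_Y; consequently the Kullback–Leibler divergence D_KL(p ‖ p_X × p_Y) (the mutual information between x and E x) equals +∞. -/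
open MeasureTheory ProbabilityTheory
open scoped ENNReal NNReal

open Classical in
/-- Kullback–Leibler divergence: `∫ log (dp/dq) dp` if `p ≪ q`, and `+∞` otherwise. -/
noncomputable def klDiv {Ω : Type*} [MeasurableSpace Ω] (p q : Measure Ω) : ℝ≥0∞ :=
  if p ≪ q then ENNReal.ofReal (∫ ω, Real.log (p.rnDeriv q ω).toReal ∂p) else ⊤

/-- A measure is Gaussian if every continuous linear functional has a (possibly
degenerate) Gaussian distribution on `ℝ`. -/
def IsGaussianMeasure {E : Type*} [NormedAddCommGroup E] [NormedSpace ℝ E]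
    [MeasurableSpace E] (μ : Measure E) : Prop :=
  ∀ L : E →L[ℝ] ℝ, ∃ (m : ℝ) (v : ℝ≥0), μ.map L = gaussianReal m v

/-- The covariance matrix of a measure on `ℝ^n`. -/
noncomputable def covMatrix {n : ℕ} (μ : Measure (Fin n → ℝ)) :
    Matrix (Fin n) (Fin n) ℝ :=
  Matrix.of fun i j =>
    ∫ x, (x i - ∫ y, y i ∂μ) * (x j - ∫ y, y j ∂μ) ∂μ

/-!
The law `p` of `(x, E x)` is carried by the graph `{(x, y) | y = E x}`. By Fubini, the graph is
null for `p_X ⊗ p_Y` as soon as `p_Y` has no atoms, since each vertical section is a single point.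
And `p_Y` has no atoms: for a nonzero row `E i`, an atom of `p_Y` would be an atom of the
coordinate `y i = E i ⬝ᵥ x`, a real Gaussian of variance `E i ⬝ᵥ covMatrix μ *ᵥ E i > 0`.
-/

open Matrix

namespace MeasureTheory

variable {α β : Type*} [MeasurableSpace α] [MeasurableSpace β] {f : α → β}

lemma NullSingletonClass.of_map [MeasurableSingletonClass β] {μ : Measure α} (hf : Measurable f)
    [NullSingletonClass (μ.map f)] : NullSingletonClass μ where
  measure_singleton x := by
    have hfiber : μ (f ⁻¹' {f x}) = 0 := by
      rw [← Measure.map_apply hf (measurableSet_singleton (f x)), measure_singleton]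
    exact measure_mono_null (fun y (hy : y = x) => congrArg f hy) hfiber

variable [MeasurableEq β]

lemma _root_.Measurable.measurableSet_graph (hf : Measurable f) :
    MeasurableSet {q : α × β | q.2 = f q.1} :=
  measurableSet_eq_fun measurable_snd (hf.comp measurable_fst)

lemma Measure.prod_graph_eq_zero (ν : Measure α) (ρ : Measure β) [SFinite ρ]
    [NullSingletonClass ρ] (hf : Measurable f) : ν.prod ρ {q | q.2 = f q.1} = 0 := by
  rw [Measure.prod_apply hf.measurableSet_graph]
  simp [Set.preimage]

theorem Measure.not_map_prodMk_absolutelyContinuous_prod (μ : Measure α) [NeZero μ]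
    (hf : Measurable f) (ν : Measure α) (ρ : Measure β) [SFinite ρ] [NullSingletonClass ρ] :
    ¬ μ.map (fun x => (x, f x)) ≪ ν.prod ρ := by
  intro hac
  have hgraph := hac (Measure.prod_graph_eq_zero ν ρ hf)
  rw [Measure.map_apply (by fun_prop) hf.measurableSet_graph] at hgraph
  simp only [Set.preimage_ofPred_eq, Set.ofPred_true, Measure.measure_univ_eq_zero] at hgraph
  exact NeZero.ne μ hgraph

end MeasureTheory

lemma variance_dotProduct {n : ℕ} (μ : Measure (Fin n → ℝ)) [IsFiniteMeasure μ]
    (hμ : ∀ i, MemLp (fun x => x i) 2 μ) (c : Fin n → ℝ) :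
    Var[fun x => c ⬝ᵥ x; μ] = c ⬝ᵥ (covMatrix μ *ᵥ c) := by
  have hterm : ∀ i, MemLp (fun x : Fin n → ℝ => c i * x i) 2 μ :=
    fun i => (hμ i).const_mul (c i)
  rw [← covariance_self (by fun_prop)]
  simp only [dotProduct]
  rw [covariance_fun_sum_fun_sum hterm hterm]
  simp only [covariance_const_mul_left, covariance_const_mul_right, mulVec, dotProduct,
    Finset.mul_sum]
  refine Finset.sum_congr rfl fun i _ => Finset.sum_congr rfl fun j _ => ?_
  simp only [covMatrix, covariance, Matrix.of_apply]
  ring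

lemma IsGaussian.nullSingletonClass_map_dotProduct {n : ℕ} (μ : Measure (Fin n → ℝ))
    [IsGaussian μ] (hcov : (covMatrix μ).PosDef) {c : Fin n → ℝ} (hc : c ≠ 0) :
    NullSingletonClass (μ.map (c ⬝ᵥ ·)) := by
  let L : StrongDual ℝ (Fin n → ℝ) := LinearMap.toContinuousLinearMap (dotProductBilin ℝ ℝ c)
  have hcoord (i : Fin n) : MemLp (fun x => x i) 2 μ :=
    IsGaussian.memLp_dual μ (ContinuousLinearMap.proj i) 2 (by simp)
  have hvar : 0 < Var[L; μ] := by
    have hpos := hcov.dotProduct_mulVec_pos hc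
    rwa [star_trivial, ← variance_dotProduct μ hcoord] at hpos
  have hmap : μ.map (c ⬝ᵥ ·) = gaussianReal μ[L] (Var[L; μ]).toNNReal :=
    IsGaussian.map_eq_gaussianReal L
  rw [hmap]
  exact nullSingletonClass_gaussianReal (by simpa using hvar)

theorem deterministic_linear_observation_infinite_mi_general (n k : ℕ)
    (μ : Measure (Fin n → ℝ))
    (hGauss : IsGaussianMeasure μ) (hcov : (covMatrix μ).PosDef)
    (E : Matrix (Fin k) (Fin n) ℝ) (hE : E ≠ 0) :
    ¬ (μ.map fun x => (x, E.mulVec x)) ≪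
        (((μ.map fun x => (x, E.mulVec x)).map Prod.fst).prod
          ((μ.map fun x => (x, E.mulVec x)).map Prod.snd)) ∧
    klDiv (μ.map fun x => (x, E.mulVec x))
        (((μ.map fun x => (x, E.mulVec x)).map Prod.fst).prod
          ((μ.map fun x => (x, E.mulVec x)).map Prod.snd)) = ⊤ := by
  have : IsGaussian μ := isGaussian_of_map_eq_gaussianReal hGauss
  obtain ⟨i, hi⟩ : ∃ i, E i ≠ 0 := by
    by_contra! h
    exact hE (funext h)
  have hEm : Measurable E.mulVec := (mulVecLin E).continuous_of_finiteDimensional.measurable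
  have : NullSingletonClass ((μ.map E.mulVec).map (fun y => y i)) := by
    rw [Measure.map_map (measurable_pi_apply i) hEm]
    exact IsGaussian.nullSingletonClass_map_dotProduct μ hcov hi
  have : NullSingletonClass (μ.map E.mulVec) := NullSingletonClass.of_map (measurable_pi_apply i)
  set p := μ.map fun x => (x, E.mulVec x)
  have hY : p.map Prod.snd = μ.map E.mulVec := by
    rw [Measure.map_map measurable_snd (by fun_prop)]
    rfl
  have hnot : ¬ p ≪ (p.map Prod.fst).prod (p.map Prod.snd) := by
    rw [hY]
    exact Measure.not_map_prodMk_absolutelyContinuous_prod μ hEm _ _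
  exact ⟨hnot, if_neg hnot⟩

/-- Let `μ` be a Gaussian measure on `ℝ^n` with positive definite
covariance, let `E` be a nonzero `k × n` real matrix, and let `p` be the law of
`x ↦ (x, E x)` under `μ`. Then `p` is not absolutely continuous with respect to the
product of its marginals, and hence the mutual information
`D_KL(p ‖ p_X × p_Y)` is `+∞`. -/
theorem deterministic_linear_observation_infinite_mi (n k : ℕ) (hn : 0 < n) (hk : 0 < k)
    (μ : Measure (Fin n → ℝ)) [IsProbabilityMeasure μ]
    (hGauss : IsGaussianMeasure μ) (hcov : (covMatrix μ).PosDef)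
    (E : Matrix (Fin k) (Fin n) ℝ) (hE : E ≠ 0) :
    ¬ (μ.map fun x => (x, E.mulVec x)) ≪
        (((μ.map fun x => (x, E.mulVec x)).map Prod.fst).prod
          ((μ.map fun x => (x, E.mulVec x)).map Prod.snd)) ∧
    klDiv (μ.map fun x => (x, E.mulVec x))
        (((μ.map fun x => (x, E.mulVec x)).map Prod.fst).prod
          ((μ.map fun x => (x, E.mulVec x)).map Prod.snd)) = ⊤ :=
  deterministic_linear_observation_infinite_mi_general n k μ hGauss hcov E hE
end
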